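/- (Balanced growth path with log utility, γ = 1.) Let G > 1, e1, e2 > 0, m > 0, w := e2/e1, and let s* ∈ (0,1) be the unique solution of G·s*·c_z = s*·c_y − m·c at (y*,z*) := (1−s*, G·(w+s*)). Then the sequence S_t := s*·e1·G^t is an equilibrium (0 < S_t < e1·G^t and the difference equation with γ = 1 holds for all t), with r_t = m·(c/c_y)(y*,z*)·e1·G^t, P_t = (G·s*·c_z/c_y)(y*,z*)·e1·G^t, constant gross interest rate R_t = (c_y/c_z)(y*,z*) = G + m·c(y*,z*)/(s*·c_z(y*,z*)) > G, constant price-rent ratio P_t/r_t, and R^{−T}·P_T → 0 as T → ∞ (the transversality condition holds, so there is no housing bubble). -/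

import Mathlib

open Real Filter Set Topology

/-- Assumption C: `c` is a positive, homogeneous of degree 1, twice continuously
differentiable function on `(0,∞)²` with partial derivatives `cy, cz > 0`, second partial
derivatives `cyy, czz < 0`, and Inada conditions. -/
structure AssumptionC (c cy cz cyy cyz czz : ℝ → ℝ → ℝ) : Prop where
  c_pos : ∀ ⦃y z : ℝ⦄, 0 < y → 0 < z → 0 < c y z
  homog : ∀ ⦃l y z : ℝ⦄, 0 < l → 0 < y → 0 < z → c (l * y) (l * z) = l * c y z
  hderiv_y : ∀ ⦃y z : ℝ⦄, 0 < y → 0 < z → HasDerivAt (fun u => c u z) (cy y z) y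
  hderiv_z : ∀ ⦃y z : ℝ⦄, 0 < y → 0 < z → HasDerivAt (fun v => c y v) (cz y z) z
  hderiv_yy : ∀ ⦃y z : ℝ⦄, 0 < y → 0 < z → HasDerivAt (fun u => cy u z) (cyy y z) y
  hderiv_yz : ∀ ⦃y z : ℝ⦄, 0 < y → 0 < z → HasDerivAt (fun v => cy y v) (cyz y z) z
  hderiv_zy : ∀ ⦃y z : ℝ⦄, 0 < y → 0 < z → HasDerivAt (fun u => cz u z) (cyz y z) y
  hderiv_zz : ∀ ⦃y z : ℝ⦄, 0 < y → 0 < z → HasDerivAt (fun v => cz y v) (czz y z) z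
  cy_pos : ∀ ⦃y z : ℝ⦄, 0 < y → 0 < z → 0 < cy y z
  cz_pos : ∀ ⦃y z : ℝ⦄, 0 < y → 0 < z → 0 < cz y z
  cyy_neg : ∀ ⦃y z : ℝ⦄, 0 < y → 0 < z → cyy y z < 0
  czz_neg : ∀ ⦃y z : ℝ⦄, 0 < y → 0 < z → czz y z < 0
  cont2 : ContinuousOn (fun p : ℝ × ℝ => (cyy p.1 p.2, cyz p.1 p.2, czz p.1 p.2))
    {p : ℝ × ℝ | 0 < p.1 ∧ 0 < p.2}
  inada_y : ∀ ⦃z : ℝ⦄, 0 < z → Tendsto (fun y => cy y z) (𝓝[>] (0:ℝ)) atTop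
  inada_z : ∀ ⦃y : ℝ⦄, 0 < y → Tendsto (fun z => cz y z) (𝓝[>] (0:ℝ)) atTop

/-- Equilibrium with log utility (`γ = 1`): `0 < S_t < e1·G^t` and
`S_{t+1}·c_z = S_t·c_y − m·c` at `(y_t,z_t) = (e1·G^t − S_t, e2·G^{t+1} + S_{t+1})`. -/
def IsEquilibrium1 (c cy cz : ℝ → ℝ → ℝ) (e1 e2 G m : ℝ) (S : ℕ → ℝ) : Prop :=
  ∀ t : ℕ, 0 < S t ∧ S t < e1 * G ^ t ∧
    S (t + 1) * cz (e1 * G ^ t - S t) (e2 * G ^ (t + 1) + S (t + 1)) =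
      S t * cy (e1 * G ^ t - S t) (e2 * G ^ (t + 1) + S (t + 1)) -
        m * c (e1 * G ^ t - S t) (e2 * G ^ (t + 1) + S (t + 1))

/-- The rent with log utility: `r_t = m·c(y_t,z_t)/c_y(y_t,z_t)`. -/
noncomputable def rent1 (c cy : ℝ → ℝ → ℝ) (e1 e2 G m : ℝ) (S : ℕ → ℝ) (t : ℕ) : ℝ :=
  m * c (e1 * G ^ t - S t) (e2 * G ^ (t + 1) + S (t + 1)) /
    cy (e1 * G ^ t - S t) (e2 * G ^ (t + 1) + S (t + 1))

/-- The housing price `P_t = S_t − r_t`. -/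
noncomputable def price1 (c cy : ℝ → ℝ → ℝ) (e1 e2 G m : ℝ) (S : ℕ → ℝ) (t : ℕ) : ℝ :=
  S t - rent1 c cy e1 e2 G m S t

/-- The gross interest rate `R_t = S_{t+1}/P_t`. -/
noncomputable def irate1 (c cy : ℝ → ℝ → ℝ) (e1 e2 G m : ℝ) (S : ℕ → ℝ) (t : ℕ) : ℝ :=
  S (t + 1) / price1 c cy e1 e2 G m S t

/-!
Differentiating `c (l * y) (l * z) = l * c y z` shows that `c_y` and `c_z` are homogeneous of
degree 0. Along `S_t = s* e1 G^t` the consumption pair is `(y_t, z_t) = e1 G^t (y*, z*)`, so `c`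
scales by `e1 G^t` while `c_y, c_z` stay at their steady-state values: the equilibrium equation
at `t` is `e1 G^t` times the equation defining `s*`, rent and price grow like `G^t`, and
`R_t = S_{t+1}/P_t = c_y/c_z` is constant. The defining equation gives `R = G + m c/(s* c_z) > G`,
so `R^{-T} P_T` is a geometric sequence of ratio `G/R < 1`.
-/

theorem HasDerivAt.eq_of_rescale {f g : ℝ → ℝ} {d d' l x : ℝ} (hf : HasDerivAt f d x)
    (hg : HasDerivAt g d' (l * x)) (hl : l ≠ 0) (hfg : ∀ᶠ u in 𝓝 x, g (l * u) = l * f u) :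
    d' = d := by
  have hcomp : HasDerivAt (fun u => g (l * u)) (d' * l) x := by
    simpa [Function.comp_def] using hg.comp x ((hasDerivAt_id x).const_mul l)
  have hscaled : HasDerivAt (fun u => g (l * u)) (l * d) x :=
    (hf.const_mul l).congr_of_eventuallyEq hfg
  exact mul_right_cancel₀ hl ((hcomp.unique hscaled).trans (mul_comm l d))

namespace AssumptionC

variable {c cy cz cyy cyz czz : ℝ → ℝ → ℝ} {l y z : ℝ}

theorem cy_mul_mul (hC : AssumptionC c cy cz cyy cyz czz) (hl : 0 < l) (hy : 0 < y)
    (hz : 0 < z) : cy (l * y) (l * z) = cy y z :=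
  (hC.hderiv_y hy hz).eq_of_rescale (hC.hderiv_y (mul_pos hl hy) (mul_pos hl hz)) hl.ne' <| by
    filter_upwards [eventually_gt_nhds hy] with u hu using hC.homog hl hu hz

theorem cz_mul_mul (hC : AssumptionC c cy cz cyy cyz czz) (hl : 0 < l) (hy : 0 < y)
    (hz : 0 < z) : cz (l * y) (l * z) = cz y z :=
  (hC.hderiv_z hy hz).eq_of_rescale (hC.hderiv_z (mul_pos hl hy) (mul_pos hl hz)) hl.ne' <| by
    filter_upwards [eventually_gt_nhds hz] with v hv using hC.homog hl hy hv

theorem balancedPath_eval (hC : AssumptionC c cy cz cyy cyz czz) {e1 e2 G s ys zs : ℝ}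
    (he1 : 0 < e1) (hG : 0 < G) (hys : ys = 1 - s) (hzs : zs = G * (e2 / e1 + s))
    (hys0 : 0 < ys) (hzs0 : 0 < zs) (t : ℕ) :
    c (e1 * G ^ t - s * e1 * G ^ t) (e2 * G ^ (t + 1) + s * e1 * G ^ (t + 1)) =
        e1 * G ^ t * c ys zs ∧
      cy (e1 * G ^ t - s * e1 * G ^ t) (e2 * G ^ (t + 1) + s * e1 * G ^ (t + 1)) = cy ys zs ∧
      cz (e1 * G ^ t - s * e1 * G ^ t) (e2 * G ^ (t + 1) + s * e1 * G ^ (t + 1)) = cz ys zs := by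
  have hl : 0 < e1 * G ^ t := by positivity
  have hy : e1 * G ^ t - s * e1 * G ^ t = e1 * G ^ t * ys := by rw [hys]; ring
  have hz : e2 * G ^ (t + 1) + s * e1 * G ^ (t + 1) = e1 * G ^ t * zs := by
    rw [hzs]; field_simp; ring
  rw [hy, hz]
  exact ⟨hC.homog hl hys0 hzs0, hC.cy_mul_mul hl hys0 hzs0, hC.cz_mul_mul hl hys0 hzs0⟩

end AssumptionC

theorem div_eq_add_of_mul_eq_sub {G s m C Cy Cz : ℝ} (hs : s ≠ 0) (hCz : Cz ≠ 0)
    (h : G * s * Cz = s * Cy - m * C) : Cy / Cz = G + m * C / (s * Cz) := by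
  field_simp
  linear_combination -h

theorem tendsto_rpow_neg_mul_geometric {G R : ℝ} (A : ℝ) (hG : 0 ≤ G) (hGR : G < R) :
    Tendsto (fun T : ℕ => R ^ (-(T : ℝ)) * (A * G ^ T)) atTop (𝓝 0) := by
  have hR : 0 < R := hG.trans_lt hGR
  have hgeom : Tendsto (fun T : ℕ => A * (G / R) ^ T) atTop (𝓝 0) := by
    simpa using (tendsto_pow_atTop_nhds_zero_of_lt_one (div_nonneg hG hR.le)
      ((div_lt_one hR).mpr hGR)).const_mul A
  refine hgeom.congr fun T => ?_
  rw [Real.rpow_neg hR.le, Real.rpow_natCast, div_pow]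
  ring

/-- Balanced growth path with log utility: `S_t = s*·e1·G^t` is an equilibrium, with
`r_t = m·(c/c_y)·e1·G^t`, `P_t = (G·s*·c_z/c_y)·e1·G^t`, constant gross interest rate
`R = c_y/c_z = G + m·c/(s*·c_z) > G`, constant price-rent ratio, and `R^{−T}·P_T → 0`
(transversality holds: no housing bubble). -/
theorem stmt_19 (c cy cz cyy cyz czz : ℝ → ℝ → ℝ)
    (hC : AssumptionC c cy cz cyy cyz czz) (e1 e2 G m w sstar ys zs : ℝ)
    (he1 : 0 < e1) (he2 : 0 < e2) (hG : 1 < G) (hm : 0 < m)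
    (hw : w = e2 / e1) (hys : ys = 1 - sstar) (hzs : zs = G * (w + sstar))
    (hsstar : sstar ∈ Ioo (0:ℝ) 1)
    (heq : G * sstar * cz ys zs = sstar * cy ys zs - m * c ys zs) :
    IsEquilibrium1 c cy cz e1 e2 G m (fun t => sstar * e1 * G ^ t) ∧
    (∀ t : ℕ, rent1 c cy e1 e2 G m (fun t => sstar * e1 * G ^ t) t =
      m * (c ys zs / cy ys zs) * e1 * G ^ t) ∧
    (∀ t : ℕ, price1 c cy e1 e2 G m (fun t => sstar * e1 * G ^ t) t =
      G * sstar * cz ys zs / cy ys zs * e1 * G ^ t) ∧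
    (∀ t : ℕ, irate1 c cy e1 e2 G m (fun t => sstar * e1 * G ^ t) t =
      cy ys zs / cz ys zs) ∧
    cy ys zs / cz ys zs = G + m * c ys zs / (sstar * cz ys zs) ∧
    G < cy ys zs / cz ys zs ∧
    (∀ t : ℕ, price1 c cy e1 e2 G m (fun t => sstar * e1 * G ^ t) t /
        rent1 c cy e1 e2 G m (fun t => sstar * e1 * G ^ t) t =
      price1 c cy e1 e2 G m (fun t => sstar * e1 * G ^ t) 0 /
        rent1 c cy e1 e2 G m (fun t => sstar * e1 * G ^ t) 0) ∧
    Tendsto (fun T : ℕ => (cy ys zs / cz ys zs) ^ (-(T : ℝ)) *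
      price1 c cy e1 e2 G m (fun t => sstar * e1 * G ^ t) T) atTop (𝓝 0) := by
  subst hw
  obtain ⟨hs0, hs1⟩ := hsstar
  have hG0 : 0 < G := one_pos.trans hG
  have hys0 : 0 < ys := by rw [hys]; linarith
  have hzs0 : 0 < zs := by rw [hzs]; positivity
  have hcy0 := hC.cy_pos hys0 hzs0
  have hcz0 := hC.cz_pos hys0 hzs0
  have hval := hC.balancedPath_eval he1 hG0 hys hzs hys0 hzs0
  have hrent : ∀ t : ℕ, rent1 c cy e1 e2 G m (fun t => sstar * e1 * G ^ t) t =
      m * (c ys zs / cy ys zs) * e1 * G ^ t := fun t => by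
    simp only [rent1, hval]; ring
  have hprice : ∀ t : ℕ, price1 c cy e1 e2 G m (fun t => sstar * e1 * G ^ t) t =
      G * sstar * cz ys zs / cy ys zs * e1 * G ^ t := fun t => by
    rw [price1, hrent, heq]; field_simp
  have hR := div_eq_add_of_mul_eq_sub hs0.ne' hcz0.ne' heq
  have hGR : G < cy ys zs / cz ys zs := by
    have := hC.c_pos hys0 hzs0
    rw [hR]
    exact lt_add_of_pos_right G (by positivity)
  refine ⟨fun t => ⟨by positivity, ?_, ?_⟩, hrent, hprice, fun t => ?_, hR, hGR,
    fun t => ?_, ?_⟩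
  · nlinarith [show 0 < e1 * G ^ t by positivity]
  · simp only [hval]; rw [pow_succ]; linear_combination e1 * G ^ t * heq
  · rw [irate1, hprice]; field_simp; ring
  · rw [hprice, hrent, hprice, hrent]; field_simp
  · simpa only [hprice] using
      tendsto_rpow_neg_mul_geometric (G * sstar * cz ys zs / cy ys zs * e1) hG0.le hGR
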